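/- (Dynamic Programming Principle, equality part) For every φ ∈ L²(μ,Ω;ℝⁿ) and every 0 ≤ s₁ ≤ s₂ ≤ T, one has V(s₁, φ) = inf over admissible controls u ∈ 𝒰[s₁,T] of V(s₂, x_{φ,u}(s₂, ·)). -/

import Mathlib

open MeasureTheory Set

/-- An admissible process `(x, u)` on `[s, T]` for the average control problem:
`u` is measurable, takes values in `U t` for a.e. `t ∈ [s,T]`, and `x` satisfies the
integral equation `x(t,ω) = φ(ω) + ∫_s^t f(σ, x(σ,ω), u(σ), ω) dσ` on `[s,T]`. -/
def IsProcess {n m : ℕ} {Ω : Type*} [MeasurableSpace Ω]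
    (f : ℝ → EuclideanSpace ℝ (Fin n) → EuclideanSpace ℝ (Fin m) → Ω →
      EuclideanSpace ℝ (Fin n))
    (U : ℝ → Set (EuclideanSpace ℝ (Fin m))) (s T : ℝ)
    (φ : Ω → EuclideanSpace ℝ (Fin n))
    (x : ℝ → Ω → EuclideanSpace ℝ (Fin n))
    (u : ℝ → EuclideanSpace ℝ (Fin m)) : Prop :=
  Measurable u ∧ (∀ᵐ t ∂(volume.restrict (Icc s T)), u t ∈ U t) ∧
    ∀ t ∈ Icc s T, ∀ ω, x t ω = φ ω + ∫ σ in Ioc s t, f σ (x σ ω) (u σ) ω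

/-- The terminal cost functional `𝒥(ψ) = ∫_Ω g(ψ(ω), ω) dμ(ω)`. -/
noncomputable def termCost {n : ℕ} {Ω : Type*} [MeasurableSpace Ω] (μ : Measure Ω)
    (g : EuclideanSpace ℝ (Fin n) → Ω → ℝ)
    (ψ : Ω → EuclideanSpace ℝ (Fin n)) : ℝ :=
  ∫ ω, g (ψ ω) ω ∂μ

/-- The value function `V(s,φ)`: infimum of the average terminal cost over all
admissible processes on `[s,T]` starting from `φ` at time `s`. -/
noncomputable def valueFn {n m : ℕ} {Ω : Type*} [MeasurableSpace Ω] (μ : Measure Ω)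
    (f : ℝ → EuclideanSpace ℝ (Fin n) → EuclideanSpace ℝ (Fin m) → Ω →
      EuclideanSpace ℝ (Fin n))
    (U : ℝ → Set (EuclideanSpace ℝ (Fin m)))
    (g : EuclideanSpace ℝ (Fin n) → Ω → ℝ) (T s : ℝ)
    (φ : Ω → EuclideanSpace ℝ (Fin n)) : ℝ :=
  sInf { r | ∃ x u, IsProcess f U s T φ x u ∧ r = termCost μ g (x T) }


/-! Restricting a process on `[s₁, T]` to `[s₂, T]` gives a process started from `x(s₂)`;
conversely, following it on `[s₁, s₂]` and then any process started from `x(s₂)` gives a process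
on `[s₁, T]` with the terminal cost of the latter. Hence the costs attainable from `(s₁, φ)` are
the union, over processes `x` from `(s₁, φ)`, of the costs attainable from `(s₂, x(s₂))`, and the
infimum of a union is the infimum of the infima.

Two junk values have to be excluded. `sInf` in `ℝ` is `0` on sets unbounded below, so the costs
must be bounded below: Grönwall's inequality gives `1 + ‖x(T, ω)‖ ≤ (1 + ‖φ ω‖) e^{c (T - s)}`,
so `g ≥ a - b ‖·‖²` bounds the integrand of the cost below by an integrable function. And the
integral equation only splits at `s₂` if its integrand is integrable, which `IsProcess` does not
say: past the supremum of the times up to which it is integrable, the integral would be `0`, the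
trajectory would be frozen at its initial value, and the integrand integrable after all. -/

open Filter Topology Real

theorem csInf_image_eq_csInf_image_csInf {α ι : Type*} [ConditionallyCompleteLattice α]
    {S : Set ι} {J : ι → α} {P : ι → Set α} (hbdd : BddBelow (J '' S))
    (hmem : ∀ i ∈ S, J i ∈ P i) (hsub : ∀ i ∈ S, P i ⊆ J '' S) :
    sInf (J '' S) = sInf ((fun i => sInf (P i)) '' S) := by
  obtain rfl | hS := S.eq_empty_or_nonempty
  · simp
  have hP_bdd : ∀ i ∈ S, BddBelow (P i) := fun i hi => hbdd.mono (hsub i hi)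
  refine le_antisymm (le_csInf (hS.image _) ?_) (le_csInf (hS.image _) ?_)
  · rintro _ ⟨i, hi, rfl⟩
    exact csInf_le_csInf hbdd ⟨J i, hmem i hi⟩ (hsub i hi)
  · have hbdd' : BddBelow ((fun i => sInf (P i)) '' S) := by
      obtain ⟨b, hb⟩ := hbdd
      refine ⟨b, ?_⟩
      rintro _ ⟨j, hj, rfl⟩
      exact le_csInf ⟨J j, hmem j hj⟩ fun r hr => hb (hsub j hj hr)
    rintro _ ⟨i, hi, rfl⟩
    exact (csInf_le hbdd' ⟨i, hi, rfl⟩).trans (csInf_le (hP_bdd i hi) (hmem i hi))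

theorem min_integral_le_integral {α : Type*} [MeasurableSpace α] {μ : Measure α} {ℓ G : α → ℝ}
    (hℓ : Integrable ℓ μ) (hle : ℓ ≤ᵐ[μ] G) : min (∫ a, ℓ a ∂μ) 0 ≤ ∫ a, G a ∂μ := by
  by_cases hG : Integrable G μ
  · exact (min_le_left _ _).trans (integral_mono_ae hℓ hG hle)
  · exact (min_le_right _ _).trans (integral_undef hG).ge

theorem setIntegral_Ioc_add_adjacent {E : Type*} [NormedAddCommGroup E] [NormedSpace ℝ E]
    {g : ℝ → E} {a b c : ℝ} (hab : a ≤ b) (hbc : b ≤ c)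
    (hg₁ : IntegrableOn g (Ioc a b)) (hg₂ : IntegrableOn g (Ioc b c)) :
    (∫ σ in Ioc a b, g σ) + ∫ σ in Ioc b c, g σ = ∫ σ in Ioc a c, g σ := by
  rw [← setIntegral_union (Ioc_disjoint_Ioc_of_le le_rfl) measurableSet_Ioc hg₁ hg₂,
    Ioc_union_Ioc_eq_Ioc hab hbc]

theorem add_setIntegral_le_mul_exp_of_le_mul {ψ : ℝ → ℝ} {a b c K : ℝ} (hc : 0 ≤ c)
    (hψ₀ : ∀ σ ∈ Ioc a b, 0 ≤ ψ σ) (hψ : IntegrableOn ψ (Ioc a b))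
    (hle : ∀ σ ∈ Ioc a b, ψ σ ≤ c * (K + ∫ τ in Ioc a σ, ψ τ)) :
    ∀ t ∈ Icc a b, K + ∫ τ in Ioc a t, ψ τ ≤ K * exp (c * (t - a)) := by
  set G : ℝ → ℝ := fun t => K + ∫ τ in Ioc a t, ψ τ
  have hG_cont : ContinuousOn G (Icc a b) :=
    continuousOn_const.add
      (intervalIntegral.continuousOn_primitive ((integrableOn_Icc_iff_integrableOn_Ioc).2 hψ))
  have hG_sub : ∀ t z, a ≤ t → t ≤ z → z ≤ b → G z - G t = ∫ τ in Ioc t z, ψ τ := by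
    intro t z hat htz hzb
    rw [add_sub_add_left_eq_sub, sub_eq_iff_eq_add', setIntegral_Ioc_add_adjacent hat htz
      (hψ.mono_set (Ioc_subset_Ioc_right (htz.trans hzb))) (hψ.mono_set (Ioc_subset_Ioc hat hzb))]
  have hG_mono : ∀ t z, a ≤ t → t ≤ z → z ≤ b → G t ≤ G z := fun t z hat htz hzb =>
    sub_nonneg.1 <| (hG_sub t z hat htz hzb).symm ▸ setIntegral_nonneg measurableSet_Ioc
      fun σ hσ => hψ₀ σ ⟨hat.trans_lt hσ.1, hσ.2.trans hzb⟩
  -- `G` need not be differentiable, but `ψ ≤ c * G` with `G` monotone bounds its right slopes by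
  -- `c * G z` at nearby `z`, which is all Grönwall's inequality asks for.
  refine fun t ht => (le_gronwallBound_of_liminf_deriv_right_le (f' := fun t => c * G t)
    (δ := K) (ε := 0) hG_cont ?_ (by simp [G]) (fun t _ => (add_zero _).ge) t ht).trans_eq
    (gronwallBound_ε0 _ _ _)
  intro t ht r hr
  have hGt : Tendsto (fun z => c * G z) (𝓝[>] t) (𝓝 (c * G t)) :=
    (((hG_cont t (Ico_subset_Icc_self ht)).mono_of_mem_nhdsWithin
      (mem_of_superset (Ioo_mem_nhdsGT ht.2) (Ioo_subset_Icc_self.trans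
        (Icc_subset_Icc_left ht.1)))).tendsto).const_mul c
  refine ((hGt.eventually (gt_mem_nhds hr)).and (Ioo_mem_nhdsGT ht.2)).frequently.mono ?_
  rintro z ⟨hzr, htz, hzb⟩
  have hint : ∫ τ in Ioc t z, ψ τ ≤ c * G z * (z - t) := by
    refine (Real.le_norm_self _).trans ?_
    rw [← volume_real_Ioc_of_le htz.le]
    refine norm_setIntegral_le_of_norm_le_const measure_Ioc_lt_top fun σ hσ => ?_
    have hσ' : σ ∈ Ioc a b := ⟨ht.1.trans_lt hσ.1, hσ.2.trans hzb.le⟩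
    rw [Real.norm_of_nonneg (hψ₀ σ hσ')]
    exact (hle σ hσ').trans (mul_le_mul_of_nonneg_left (hG_mono σ z hσ'.1.le hσ.2 hzb.le) hc)
  rw [hG_sub t z ht.1 htz.le hzb.le]
  calc (z - t)⁻¹ * ∫ τ in Ioc t z, ψ τ ≤ (z - t)⁻¹ * (c * G z * (z - t)) := by gcongr
    _ = c * G z := by field_simp [(sub_pos.2 htz).ne']
    _ < r := hzr

section IntegralEquation

variable {E : Type*} [NormedAddCommGroup E] [NormedSpace ℝ E]

variable {F : ℝ → E → E} {x : ℝ → E} {x₀ : E} {s T c : ℝ}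

theorem norm_le_add_integral_norm_of_eq_add_integral
    (hx : ∀ t ∈ Icc s T, x t = x₀ + ∫ σ in Ioc s t, F σ (x σ)) :
    ∀ t ∈ Icc s T, ‖x t‖ ≤ ‖x₀‖ + ∫ σ in Ioc s t, ‖F σ (x σ)‖ := fun t ht =>
  hx t ht ▸ (norm_add_le _ _).trans (add_le_add le_rfl (norm_integral_le_integral_norm _))

theorem add_integral_norm_le_mul_exp_of_eq_add_integral (hc : 0 ≤ c)
    (hgrowth : ∀ σ y, ‖F σ y‖ ≤ c * (1 + ‖y‖))
    (hx : ∀ t ∈ Icc s T, x t = x₀ + ∫ σ in Ioc s t, F σ (x σ))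
    (hint : IntegrableOn (fun σ => F σ (x σ)) (Ioc s T)) :
    ∀ t ∈ Icc s T, 1 + ‖x₀‖ + ∫ σ in Ioc s t, ‖F σ (x σ)‖ ≤ (1 + ‖x₀‖) * exp (c * (t - s)) :=
  add_setIntegral_le_mul_exp_of_le_mul hc (fun _ _ => norm_nonneg _) hint.norm fun σ hσ =>
    (hgrowth σ (x σ)).trans <| mul_le_mul_of_nonneg_left (by
      linarith [norm_le_add_integral_norm_of_eq_add_integral hx σ (Ioc_subset_Icc_self hσ)]) hc

theorem integrableOn_of_eq_add_integral (hc : 0 ≤ c)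
    (hgrowth : ∀ σ y, ‖F σ y‖ ≤ c * (1 + ‖y‖))
    (hmeas : AEStronglyMeasurable (fun σ => F σ x₀) (volume.restrict (Ioc s T)))
    (hx : ∀ t ∈ Icc s T, x t = x₀ + ∫ σ in Ioc s t, F σ (x σ)) :
    IntegrableOn (fun σ => F σ (x σ)) (Ioc s T) := by
  obtain hTs | hsT := lt_or_ge T s
  · simp [Ioc_eq_empty_of_le hTs.le]
  set I : Set ℝ := {t | t ∈ Icc s T ∧ IntegrableOn (fun σ => F σ (x σ)) (Ioc s t)}
  have hsI : s ∈ I := ⟨⟨le_rfl, hsT⟩, by simp⟩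
  have hI_bdd : BddAbove I := ⟨T, fun t ht => ht.1.2⟩
  set τ := sSup I
  have hsτ : s ≤ τ := le_csSup hI_bdd hsI
  have hτT : τ ≤ T := csSup_le ⟨s, hsI⟩ fun t ht => ht.1.2
  have hI_bound : ∀ t ∈ I, ∫ σ in Ioc s t, ‖F σ (x σ)‖ ≤ (1 + ‖x₀‖) * exp (c * (t - s)) :=
    fun t ht => by
      have := add_integral_norm_le_mul_exp_of_eq_add_integral hc hgrowth
        (fun t' ht' => hx t' ⟨ht'.1, ht'.2.trans ht.1.2⟩) ht.2 t ⟨ht.1.1, le_rfl⟩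
      linarith [norm_nonneg x₀]
  obtain ⟨u, -, hu_lim, hu_mem⟩ := exists_seq_tendsto_sSup ⟨s, hsI⟩ hI_bdd
  have hτI : τ ∈ I := ⟨⟨hsτ, hτT⟩, integrableOn_Ioc_of_intervalIntegral_norm_bounded_right
    (fun j => (hu_mem j).2) hu_lim (Eventually.of_forall fun j => (hI_bound _ (hu_mem j)).trans
      (mul_le_mul_of_nonneg_left (exp_le_exp.2 (mul_le_mul_of_nonneg_left
        (sub_le_sub_right (hu_mem j).1.2 s) hc)) (by positivity)))⟩
  suffices hτ : τ = T from hτ ▸ hτI.2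
  by_contra hne
  -- Past `τ` the integrals in `hx` are junk values `0`, so `x` is frozen at `x₀` there.
  have hfrozen : ∀ σ ∈ Ioc τ T, F σ (x σ) = F σ x₀ := by
    intro σ hσ
    have hσ' : σ ∈ Icc s T := ⟨hsτ.trans hσ.1.le, hσ.2⟩
    rw [hx σ hσ', integral_undef fun hi => (le_csSup hI_bdd ⟨hσ', hi⟩).not_gt hσ.1, add_zero]
  have hint_τT : IntegrableOn (fun σ => F σ (x σ)) (Ioc τ T) :=
    (IntegrableOn.of_bound measure_Ioc_lt_top (hmeas.mono_set (Ioc_subset_Ioc_left hsτ))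
      (c * (1 + ‖x₀‖)) (ae_of_all _ fun σ => hgrowth σ x₀)).congr_fun
      (fun σ hσ => (hfrozen σ hσ).symm) measurableSet_Ioc
  have hTI : T ∈ I := ⟨⟨hsT, le_rfl⟩, Ioc_union_Ioc_eq_Ioc hsτ hτT ▸ hτI.2.union hint_τT⟩
  exact (hτT.lt_of_ne hne).not_ge (le_csSup hI_bdd hTI)

end IntegralEquation

section Admissible

variable {n m : ℕ} {Ω : Type*}
  {f : ℝ → EuclideanSpace ℝ (Fin n) → EuclideanSpace ℝ (Fin m) → Ω → EuclideanSpace ℝ (Fin n)}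
  {U : ℝ → Set (EuclideanSpace ℝ (Fin m))} {φ : Ω → EuclideanSpace ℝ (Fin n)}
  {x : ℝ → Ω → EuclideanSpace ℝ (Fin n)} {u : ℝ → EuclideanSpace ℝ (Fin m)} {s T c : ℝ}

theorem measurable_apply_control (hfmeas : ∀ y v ω, Measurable fun t => f t y v ω)
    (hfcont : ∀ t ω, Continuous fun p : EuclideanSpace ℝ (Fin n) × EuclideanSpace ℝ (Fin m) =>
      f t p.1 p.2 ω)
    (hu : Measurable u) (y : EuclideanSpace ℝ (Fin n)) (ω : Ω) :
    Measurable fun σ => f σ y (u σ) ω :=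
  (measurable_uncurry_of_continuous_of_measurable (fun t => hfcont t ω)
    (fun p => hfmeas p.1 p.2 ω)).comp ((measurable_const.prodMk hu).prodMk measurable_id)

variable [MeasurableSpace Ω]

theorem IsProcess.integrableOn (hp : IsProcess f U s T φ x u) (hc : 0 ≤ c)
    (hfmeas : ∀ y v ω, Measurable fun t => f t y v ω)
    (hfcont : ∀ t ω, Continuous fun p : EuclideanSpace ℝ (Fin n) × EuclideanSpace ℝ (Fin m) =>
      f t p.1 p.2 ω)
    (hgrowth : ∀ t y v ω, ‖f t y v ω‖ ≤ c * (1 + ‖y‖)) (ω : Ω) :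
    IntegrableOn (fun σ => f σ (x σ ω) (u σ) ω) (Ioc s T) :=
  integrableOn_of_eq_add_integral (F := fun σ y => f σ y (u σ) ω) hc
    (fun σ y => hgrowth σ y (u σ) ω)
    (measurable_apply_control hfmeas hfcont hp.1 (φ ω) ω).aestronglyMeasurable
    fun t ht => hp.2.2 t ht ω

theorem IsProcess.one_add_norm_le (hp : IsProcess f U s T φ x u) (hc : 0 ≤ c)
    (hgrowth : ∀ t y v ω, ‖f t y v ω‖ ≤ c * (1 + ‖y‖))
    (hint : ∀ ω, IntegrableOn (fun σ => f σ (x σ ω) (u σ) ω) (Ioc s T)) :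
    ∀ t ∈ Icc s T, ∀ ω, 1 + ‖x t ω‖ ≤ (1 + ‖φ ω‖) * exp (c * (t - s)) := fun t ht ω => by
  have hx : ∀ t ∈ Icc s T, x t ω = φ ω + ∫ σ in Ioc s t, f σ (x σ ω) (u σ) ω :=
    fun t ht => hp.2.2 t ht ω
  linarith [norm_le_add_integral_norm_of_eq_add_integral (F := fun σ y => f σ y (u σ) ω) hx t ht,
    add_integral_norm_le_mul_exp_of_eq_add_integral (F := fun σ y => f σ y (u σ) ω) hc
      (fun σ y => hgrowth σ y (u σ) ω) hx (hint ω) t ht]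

theorem IsProcess.restrict {s₂ : ℝ} (hp : IsProcess f U s T φ x u) (hs₂ : s ≤ s₂)
    (hs₂T : s₂ ≤ T) (hint : ∀ ω, IntegrableOn (fun σ => f σ (x σ ω) (u σ) ω) (Ioc s T)) :
    IsProcess f U s₂ T (x s₂) x u := by
  refine ⟨hp.1, ae_restrict_of_ae_restrict_of_subset (Icc_subset_Icc_left hs₂) hp.2.1,
    fun t ht ω => ?_⟩
  rw [hp.2.2 t ⟨hs₂.trans ht.1, ht.2⟩ ω, hp.2.2 s₂ ⟨hs₂, hs₂T⟩ ω, add_assoc,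
    setIntegral_Ioc_add_adjacent hs₂ ht.1 ((hint ω).mono_set (Ioc_subset_Ioc_right hs₂T))
      ((hint ω).mono_set (Ioc_subset_Ioc hs₂ ht.2))]

theorem IsProcess.concat {s₂ : ℝ} {y : ℝ → Ω → EuclideanSpace ℝ (Fin n)}
    {v : ℝ → EuclideanSpace ℝ (Fin m)} (hp : IsProcess f U s T φ x u)
    (hq : IsProcess f U s₂ T (x s₂) y v) (hs₂ : s ≤ s₂) (hs₂T : s₂ ≤ T)
    (hintx : ∀ ω, IntegrableOn (fun σ => f σ (x σ ω) (u σ) ω) (Ioc s s₂))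
    (hinty : ∀ ω, IntegrableOn (fun σ => f σ (y σ ω) (v σ) ω) (Ioc s₂ T)) :
    ∃ z w, IsProcess f U s T φ z w ∧ z T = y T := by
  classical
  set z := (Iic s₂).piecewise x y
  set w := (Iic s₂).piecewise u v
  have hz_left : ∀ σ ≤ s₂, z σ = x σ ∧ w σ = u σ := fun σ hσ =>
    ⟨piecewise_eq_of_mem _ _ _ hσ, piecewise_eq_of_mem _ _ _ hσ⟩
  have hz_right : ∀ σ, s₂ < σ → z σ = y σ ∧ w σ = v σ := fun σ hσ =>
    ⟨piecewise_eq_of_notMem _ _ _ hσ.not_ge, piecewise_eq_of_notMem _ _ _ hσ.not_ge⟩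
  have hxy : x s₂ = y s₂ := funext fun ω => by simpa using (hq.2.2 s₂ ⟨le_rfl, hs₂T⟩ ω).symm
  refine ⟨z, w, ⟨hp.1.piecewise measurableSet_Iic hq.1, ?_, fun t ht ω => ?_⟩, ?_⟩
  · rw [← Icc_union_Ioc_eq_Icc hs₂ hs₂T, ae_restrict_union_iff]
    refine ⟨?_, ?_⟩
    · filter_upwards [ae_restrict_of_ae_restrict_of_subset (Icc_subset_Icc_right hs₂T) hp.2.1,
        ae_restrict_mem measurableSet_Icc] with σ hσ hσs using (hz_left σ hσs.2).2 ▸ hσ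
    · filter_upwards [ae_restrict_of_ae_restrict_of_subset Ioc_subset_Icc_self hq.2.1,
        ae_restrict_mem measurableSet_Ioc] with σ hσ hσs using (hz_right σ hσs.1).2 ▸ hσ
  · have hleft : EqOn (fun σ => f σ (z σ ω) (w σ) ω) (fun σ => f σ (x σ ω) (u σ) ω)
        (Iic s₂) := fun σ hσ => by simp only [hz_left σ hσ]
    have hright : EqOn (fun σ => f σ (z σ ω) (w σ) ω) (fun σ => f σ (y σ ω) (v σ) ω)
        (Ioi s₂) := fun σ hσ => by simp only [hz_right σ hσ]
    obtain hts | hts := le_or_gt t s₂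
    · rw [(hz_left t hts).1, hp.2.2 t ⟨ht.1, hts.trans hs₂T⟩ ω,
        setIntegral_congr_fun measurableSet_Ioc (hleft.mono fun σ hσ => hσ.2.trans hts)]
    · rw [(hz_right t hts).1, hq.2.2 t ⟨hts.le, ht.2⟩ ω, hp.2.2 s₂ ⟨hs₂, hs₂T⟩ ω, add_assoc,
        ← setIntegral_Ioc_add_adjacent hs₂ hts.le, setIntegral_congr_fun measurableSet_Ioc
          (hleft.mono fun σ hσ => hσ.2), setIntegral_congr_fun measurableSet_Ioc
          (hright.mono fun σ hσ => hσ.1)]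
      · exact (hintx ω).congr_fun (hleft.mono fun σ hσ => hσ.2).symm measurableSet_Ioc
      · exact ((hinty ω).mono_set (Ioc_subset_Ioc_right ht.2)).congr_fun
          (hright.mono fun σ hσ => hσ.1).symm measurableSet_Ioc
  · obtain hTs | hTs := le_or_gt T s₂
    · rw [le_antisymm hTs hs₂T, (hz_left s₂ le_rfl).1, hxy]
    · exact (hz_right T hTs).1

theorem bddBelow_termCost_of_isProcess {μ : Measure Ω} [IsFiniteMeasure μ]
    {g : EuclideanSpace ℝ (Fin n) → Ω → ℝ} (hsT : s ≤ T) (hc : 0 ≤ c)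
    (hfmeas : ∀ y v ω, Measurable fun t => f t y v ω)
    (hfcont : ∀ t ω, Continuous fun p : EuclideanSpace ℝ (Fin n) × EuclideanSpace ℝ (Fin m) =>
      f t p.1 p.2 ω)
    (hgrowth : ∀ t y v ω, ‖f t y v ω‖ ≤ c * (1 + ‖y‖))
    (hgbound : ∃ a : Ω → ℝ, Integrable a μ ∧ ∃ b : ℝ, 0 ≤ b ∧
      ∀ y ω, a ω - b * ‖y‖ ^ 2 ≤ g y ω)
    (hφ : Integrable (fun ω => ‖φ ω‖ ^ 2) μ) :
    BddBelow {r | ∃ x u, IsProcess f U s T φ x u ∧ r = termCost μ g (x T)} := by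
  obtain ⟨a, ha, b, hb, hg⟩ := hgbound
  set E := exp (c * (T - s))
  have hℓ : Integrable (fun ω => a ω - b * (2 * E ^ 2 * (1 + ‖φ ω‖ ^ 2))) μ :=
    ha.sub ((((integrable_const 1).add hφ).const_mul _).const_mul b)
  refine ⟨min (∫ ω, a ω - b * (2 * E ^ 2 * (1 + ‖φ ω‖ ^ 2)) ∂μ) 0, ?_⟩
  rintro _ ⟨x, u, hp, rfl⟩
  refine min_integral_le_integral hℓ (ae_of_all _ fun ω => ?_)
  have hxT := hp.one_add_norm_le hc hgrowth (hp.integrableOn hc hfmeas hfcont hgrowth) T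
    ⟨hsT, le_rfl⟩ ω
  have hsq : ‖x T ω‖ ^ 2 ≤ 2 * E ^ 2 * (1 + ‖φ ω‖ ^ 2) :=
    calc ‖x T ω‖ ^ 2 ≤ ((1 + ‖φ ω‖) * E) ^ 2 := by gcongr; linarith
      _ ≤ 2 * E ^ 2 * (1 + ‖φ ω‖ ^ 2) := by nlinarith [sq_nonneg (1 - ‖φ ω‖), sq_nonneg E]
  exact (sub_le_sub_left (mul_le_mul_of_nonneg_left hsq hb) _).trans (hg _ _)

end Admissible

theorem stmt_4_general {n m : ℕ} {Ω : Type*} [MeasurableSpace Ω]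
    (μ : Measure Ω) [IsFiniteMeasure μ]
    (T c : ℝ) (hc : 0 < c)
    (f : ℝ → EuclideanSpace ℝ (Fin n) → EuclideanSpace ℝ (Fin m) → Ω →
      EuclideanSpace ℝ (Fin n))
    (U : ℝ → Set (EuclideanSpace ℝ (Fin m)))
    (g : EuclideanSpace ℝ (Fin n) → Ω → ℝ)
    (hfmeas : ∀ x u ω, Measurable fun t => f t x u ω)
    (hfcont : ∀ t ω, Continuous fun p : EuclideanSpace ℝ (Fin n) × EuclideanSpace ℝ (Fin m) =>
      f t p.1 p.2 ω)
    (hgrowth : ∀ t x u ω, ‖f t x u ω‖ ≤ c * (1 + ‖x‖))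
    (hgbound : ∃ a : Ω → ℝ, Integrable a μ ∧ ∃ b : ℝ, 0 ≤ b ∧
      ∀ x ω, a ω - b * ‖x‖ ^ 2 ≤ g x ω)
    (φ : Ω → EuclideanSpace ℝ (Fin n)) (hφ : Integrable (fun ω => ‖φ ω‖ ^ 2) μ)
    (s₁ s₂ : ℝ) (h12 : s₁ ≤ s₂) (h2T : s₂ ≤ T) :
    valueFn μ f U g T s₁ φ =
      sInf { r | ∃ x u, IsProcess f U s₁ T φ x u ∧ r = valueFn μ f U g T s₂ (x s₂) } := by
  have hint : ∀ {s ψ x u}, IsProcess f U s T ψ x u →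
      ∀ ω, IntegrableOn (fun σ => f σ (x σ ω) (u σ) ω) (Ioc s T) :=
    fun hp => hp.integrableOn hc.le hfmeas hfcont hgrowth
  set S := {p : (ℝ → Ω → EuclideanSpace ℝ (Fin n)) × (ℝ → EuclideanSpace ℝ (Fin m)) |
    IsProcess f U s₁ T φ p.1 p.2}
  have hA : {r | ∃ x u, IsProcess f U s₁ T φ x u ∧ r = termCost μ g (x T)} =
      (fun p => termCost μ g (p.1 T)) '' S := by
    ext; simp [S, eq_comm]
  have hB : {r | ∃ x u, IsProcess f U s₁ T φ x u ∧ r = valueFn μ f U g T s₂ (x s₂)} =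
      (fun p => valueFn μ f U g T s₂ (p.1 s₂)) '' S := by
    ext; simp [S, eq_comm]
  rw [valueFn, hA, hB]
  refine csInf_image_eq_csInf_image_csInf
    (P := fun p : (ℝ → Ω → EuclideanSpace ℝ (Fin n)) × (ℝ → EuclideanSpace ℝ (Fin m)) =>
      {r | ∃ y v, IsProcess f U s₂ T (p.1 s₂) y v ∧ r = termCost μ g (y T)})
    (hA ▸ bddBelow_termCost_of_isProcess (h12.trans h2T) hc.le hfmeas hfcont hgrowth hgbound hφ)
    (fun p hp => ⟨p.1, p.2, hp.restrict h12 h2T (hint hp), rfl⟩) ?_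
  rintro ⟨x, u⟩ hp _ ⟨y, v, hq, rfl⟩
  obtain ⟨z, w, hzw, hzT⟩ :=
    hp.concat hq h12 h2T (fun ω => (hint hp ω).mono_set (Ioc_subset_Ioc_right h2T)) (hint hq)
  exact ⟨(z, w), hzw, congrArg (termCost μ g) hzT⟩

/-- Dynamic Programming Principle, equality part: under the standing
hypotheses (H), for every `φ ∈ L²(μ,Ω;ℝⁿ)` and every `0 ≤ s₁ ≤ s₂ ≤ T`,
`V(s₁,φ) = inf { V(s₂, x_{φ,u}(s₂,·)) : u ∈ 𝒰[s₁,T] }`. -/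
theorem stmt_4 {n m : ℕ} {Ω : Type*} [MeasurableSpace Ω]
    (μ : Measure Ω) [IsFiniteMeasure μ]
    (T c k : ℝ) (hT : 0 < T) (hc : 0 < c) (hk : 0 < k)
    (f : ℝ → EuclideanSpace ℝ (Fin n) → EuclideanSpace ℝ (Fin m) → Ω →
      EuclideanSpace ℝ (Fin n))
    (U : ℝ → Set (EuclideanSpace ℝ (Fin m)))
    (g : EuclideanSpace ℝ (Fin n) → Ω → ℝ)
    (hUcpt : ∀ t, IsCompact (U t)) (hUne : ∀ t, (U t).Nonempty)
    (hUbd : ∃ K : Set (EuclideanSpace ℝ (Fin m)), IsCompact K ∧ ∀ t, U t ⊆ K)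
    (hUusc : ∀ F : Set (EuclideanSpace ℝ (Fin m)), IsClosed F →
      IsClosed {t : ℝ | (U t ∩ F).Nonempty})
    (hfmeas : ∀ x u ω, Measurable fun t => f t x u ω)
    (hfcont : ∀ t ω, Continuous fun p : EuclideanSpace ℝ (Fin n) × EuclideanSpace ℝ (Fin m) =>
      f t p.1 p.2 ω)
    (hgrowth : ∀ t x u ω, ‖f t x u ω‖ ≤ c * (1 + ‖x‖))
    (hLip : ∀ t x x' u ω, ‖f t x u ω - f t x' u ω‖ ≤ k * ‖x - x'‖)
    (hglsc : ∀ ω, LowerSemicontinuous fun x => g x ω)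
    (hgbound : ∃ a : Ω → ℝ, Integrable a μ ∧ ∃ b : ℝ, 0 ≤ b ∧
      ∀ x ω, a ω - b * ‖x‖ ^ 2 ≤ g x ω)
    (φ : Ω → EuclideanSpace ℝ (Fin n)) (hφ : Integrable (fun ω => ‖φ ω‖ ^ 2) μ)
    (s₁ s₂ : ℝ) (h0 : 0 ≤ s₁) (h12 : s₁ ≤ s₂) (h2T : s₂ ≤ T) :
    valueFn μ f U g T s₁ φ =
      sInf { r | ∃ x u, IsProcess f U s₁ T φ x u ∧ r = valueFn μ f U g T s₂ (x s₂) } :=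
  stmt_4_general μ T c hc f U g hfmeas hfcont hgrowth hgbound φ hφ s₁ s₂ h12 h2T
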